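/- arXiv:2105.03753 — 5 statements merged into one kernel-verified Lean document; each statement's English description precedes it below -/
import Mathlib

section
/- Let I₁,...,I_k be nonempty finite sets of vectors in Σ^m and let (c₁,...,c_k) be centers minimizing the total cost ∑_{j=1}^k ∑_{a ∈ I_j} d_H(a, c_j) subject to the constraint that for every coordinate h, the tuple (c₁[h],...,c_k[h]) lies in a given nonempty relation R_h ⊆ Σ^k. Fix a k-tuple x = (x₁,...,x_k) with x[h] ∈ R_h for all h, and fix a coordinate h with (x₁[h],...,x_k[h]) ≠ (c₁[h],...,c_k[h]). Then there exists some index j ∈ {1,...,k} such that at least ⌈|I_j|/2⌉ vectors a ∈ I_j satisfy a[h] ≠ x_j[h]. -/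
open Finset

/-- Key pointwise identity: updating the center at one coordinate shifts the Hamming
distance by the difference of indicators at that coordinate. -/
lemma hammingDist_update_eq {α : Type*} [DecidableEq α] {m : ℕ}
    (a c : Fin m → α) (h : Fin m) (v : α) :
    hammingDist a (Function.update c h v) + (if a h ≠ c h then 1 else 0)
      = hammingDist a c + (if a h ≠ v then 1 else 0) := by
  classical
  have key : ∀ b : Fin m → α,
      hammingDist a b = ∑ i, (if a i ≠ b i then 1 else 0) := by
    intro b
    rw [hammingDist, Finset.card_filter]
  rw [key, key]
  rw [← Finset.sum_erase_add _ _ (Finset.mem_univ h),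
      ← Finset.sum_erase_add _ _ (Finset.mem_univ h)]
  have hsum : ∑ i ∈ Finset.univ.erase h, (if a i ≠ Function.update c h v i then 1 else 0)
      = ∑ i ∈ Finset.univ.erase h, (if a i ≠ c i then 1 else 0) := by
    apply Finset.sum_congr rfl
    intro i hi
    rw [Function.update_of_ne (Finset.ne_of_mem_erase hi)]
  rw [hsum, Function.update_self]
  ring

/-- Structural lemma for constrained clustering: if `(c₁,...,c_k)` are optimal constrained
centers for nonempty clusters `I₁,...,I_k`, `x` is a `k`-tuple satisfying the constraints,
and the tuples of `h`-th entries of `x` and of the centers differ, then some cluster `I_j`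
has at least `⌈|I_j|/2⌉` members disagreeing with `x_j` at coordinate `h`. -/
theorem constrained_clustering_majority {α : Type*} [Fintype α] [DecidableEq α]
    {m k : ℕ}
    (I : Fin k → Finset (Fin m → α)) (hI : ∀ j, (I j).Nonempty)
    (R : Fin m → Set (Fin k → α)) (hR : ∀ h, (R h).Nonempty)
    (c : Fin k → Fin m → α)
    (hcR : ∀ h : Fin m, (fun j => c j h) ∈ R h)
    (hopt : ∀ c' : Fin k → Fin m → α, (∀ h : Fin m, (fun j => c' j h) ∈ R h) →
      ∑ j, ∑ a ∈ I j, hammingDist a (c j) ≤ ∑ j, ∑ a ∈ I j, hammingDist a (c' j))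
    (x : Fin k → Fin m → α)
    (hxR : ∀ h : Fin m, (fun j => x j h) ∈ R h)
    (h : Fin m)
    (hdiff : (fun j => x j h) ≠ (fun j => c j h)) :
    ∃ j : Fin k, ((I j).card + 1) / 2 ≤ ((I j).filter (fun a => a h ≠ x j h)).card := by
  classical
  by_contra hcon
  push_neg at hcon
  -- For each j, strictly fewer than half disagree with x at h.
  have hsmall : ∀ j, 2 * ((I j).filter (fun a => a h ≠ x j h)).card < (I j).card := by
    intro j
    have h1 := hcon j
    have h2 : ((I j).filter (fun a => a h ≠ x j h)).card ≤ (I j).card :=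
      Finset.card_filter_le _ _
    generalize ((I j).filter (fun a => a h ≠ x j h)).card = f at *
    omega
  -- The modified centers
  set c' : Fin k → Fin m → α := fun j => Function.update (c j) h (x j h) with hc'
  have hc'R : ∀ h' : Fin m, (fun j => c' j h') ∈ R h' := by
    intro h'
    by_cases hh : h' = h
    · subst hh
      have : (fun j => c' j h') = fun j => x j h' := by
        funext j; simp [hc', Function.update_self]
      rw [this]; exact hxR h'
    · have : (fun j => c' j h') = fun j => c j h' := by
        funext j; simp [hc', Function.update_of_ne hh]
      rw [this]; exact hcR h'
  -- index with strict difference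
  obtain ⟨j₀, hj₀⟩ := Function.ne_iff.mp hdiff
  -- per-cluster sum identity
  have hsumeq : ∀ j, (∑ a ∈ I j, hammingDist a (c' j))
        + ((I j).filter (fun a => a h ≠ c j h)).card
      = (∑ a ∈ I j, hammingDist a (c j))
        + ((I j).filter (fun a => a h ≠ x j h)).card := by
    intro j
    rw [Finset.card_filter, Finset.card_filter, ← Finset.sum_add_distrib,
        ← Finset.sum_add_distrib]
    exact Finset.sum_congr rfl fun a _ => hammingDist_update_eq a (c j) h (x j h)
  -- per-cluster inequality
  have hle : ∀ j, ((I j).filter (fun a => a h ≠ x j h)).card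
      ≤ ((I j).filter (fun a => a h ≠ c j h)).card := by
    intro j
    by_cases hxc : x j h = c j h
    · simp [hxc]
    · have hsub : (I j).filter (fun a => a h = x j h)
          ⊆ (I j).filter (fun a => a h ≠ c j h) := by
        intro a ha
        rw [Finset.mem_filter] at ha ⊢
        exact ⟨ha.1, ha.2 ▸ hxc⟩
      have h1 : ((I j).filter (fun a => a h = x j h)).card
          ≤ ((I j).filter (fun a => a h ≠ c j h)).card := Finset.card_le_card hsub
      have h2 := Finset.card_filter_add_card_filter_not
        (s := I j) (p := fun a => a h ≠ x j h)
      simp only [not_not] at h2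
      have h3 := hsmall j
      generalize ((I j).filter (fun a => a h ≠ x j h)).card = f1 at *
      generalize ((I j).filter (fun a => a h = x j h)).card = f2 at *
      generalize ((I j).filter (fun a => a h ≠ c j h)).card = f3 at *
      generalize (I j).card = n at *
      omega
  have hlt : ((I j₀).filter (fun a => a h ≠ x j₀ h)).card
      < ((I j₀).filter (fun a => a h ≠ c j₀ h)).card := by
    have hsub : (I j₀).filter (fun a => a h = x j₀ h)
        ⊆ (I j₀).filter (fun a => a h ≠ c j₀ h) := by
      intro a ha
      rw [Finset.mem_filter] at ha ⊢
      exact ⟨ha.1, ha.2 ▸ hj₀⟩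
    have h1 := Finset.card_le_card hsub
    have h2 := Finset.card_filter_add_card_filter_not
      (s := I j₀) (p := fun a => a h ≠ x j₀ h)
    simp only [not_not] at h2
    have h3 := hsmall j₀
    generalize ((I j₀).filter (fun a => a h ≠ x j₀ h)).card = f1 at *
    generalize ((I j₀).filter (fun a => a h = x j₀ h)).card = f2 at *
    generalize ((I j₀).filter (fun a => a h ≠ c j₀ h)).card = f3 at *
    generalize (I j₀).card = n at *
    omega
  -- strict total inequality on the indicator sums
  have hstrict : ∑ j, ((I j).filter (fun a => a h ≠ x j h)).card
      < ∑ j, ((I j).filter (fun a => a h ≠ c j h)).card :=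
    Finset.sum_lt_sum (fun j _ => hle j) ⟨j₀, Finset.mem_univ j₀, hlt⟩
  -- total sum identity
  have htotal : (∑ j, ∑ a ∈ I j, hammingDist a (c' j))
        + ∑ j, ((I j).filter (fun a => a h ≠ c j h)).card
      = (∑ j, ∑ a ∈ I j, hammingDist a (c j))
        + ∑ j, ((I j).filter (fun a => a h ≠ x j h)).card := by
    rw [← Finset.sum_add_distrib, ← Finset.sum_add_distrib]
    exact Finset.sum_congr rfl fun j _ => hsumeq j
  have hopt' := hopt c' hc'R
  have hcontr :
      (∑ j, ∑ a ∈ I j, hammingDist a (c j))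
          + ∑ j, ((I j).filter (fun a => a h ≠ x j h)).card
        < (∑ j, ∑ a ∈ I j, hammingDist a (c j))
          + ∑ j, ((I j).filter (fun a => a h ≠ x j h)).card := by
    calc (∑ j, ∑ a ∈ I j, hammingDist a (c j))
            + ∑ j, ((I j).filter (fun a => a h ≠ x j h)).card
        ≤ (∑ j, ∑ a ∈ I j, hammingDist a (c' j))
            + ∑ j, ((I j).filter (fun a => a h ≠ x j h)).card :=
          Nat.add_le_add_right hopt' _
      _ < (∑ j, ∑ a ∈ I j, hammingDist a (c' j))
            + ∑ j, ((I j).filter (fun a => a h ≠ c j h)).card :=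
          Nat.add_lt_add_left hstrict _
      _ = _ := htotal
  exact lt_irrefl _ hcontr
end

section
/- An instance (D, k, B, ℓ) of Feature Selection is a yes-instance if and only if the instance (A, |Σ|^k, B, ℓ, R) of Constrained Clustering with Outliers is a yes-instance, where A is the transpose of D and R is the family of relations in which every R_i equals the set {z₁,...,z_k} of columns of the lexicographic enumeration matrix Q of Σ^k (viewed as |Σ|^k-tuples). -/
private lemma swap_count {m n : ℕ} (O : Finset (Fin m)) (P : Fin m → Fin n → Prop)
    [∀ i j, Decidable (P i j)] :
    ∑ i ∈ (Finset.univ : Finset (Fin m)) \ O,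
        ((Finset.univ : Finset (Fin n)).filter (fun j => P i j)).card
      = ∑ j : Fin n,
        ((Finset.univ : Finset (Fin m)).filter (fun i => i ∉ O ∧ P i j)).card := by
  have h : (Finset.univ : Finset (Fin m)) \ O = Finset.univ.filter (fun i => i ∉ O) := by
    ext i; simp
  rw [h]
  simp only [Finset.card_filter, Finset.sum_filter]
  have h2 : ∀ i : Fin m, (if i ∉ O then ∑ j : Fin n, if P i j then 1 else 0 else 0)
      = ∑ j : Fin n, if i ∉ O ∧ P i j then 1 else 0 := by
    intro i; by_cases hi : i ∉ O <;> simp [hi]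
  simp only [h2]
  exact Finset.sum_comm

/-- Equivalence of Feature Selection and the constructed instance of Constrained Clustering
with Outliers. Here `D : Fin m → Fin n → α` is the data matrix (rows = features, columns =
points), `Q` enumerates all `k`-strings over `α` (rows of the lexicographic matrix), and in
the constructed instance the columns of `A = Dᵀ` (i.e. the rows of `D`) are clustered into
`|α|^k` clusters whose centers must, at every coordinate `j`, form one of the `k` tuples
`z_t = (Q i t)_{i}` (the columns of `Q`). -/
theorem featureSelection_iff_constrainedClustering
    {α : Type*} [Fintype α] [DecidableEq α] {m n k B ℓ : ℕ} (hk : 0 < k)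
    (D : Fin m → Fin n → α)
    (Q : Fin (Fintype.card α ^ k) → (Fin k → α)) (hQ : Function.Bijective Q) :
    -- Feature Selection is a yes-instance:
    (∃ (O : Finset (Fin m)) (part : Fin n → Fin k) (c : Fin k → Fin m → α),
        O.card ≤ ℓ ∧
        ∑ j : Fin n,
          ((Finset.univ : Finset (Fin m)).filter
            (fun i => i ∉ O ∧ D i j ≠ c (part j) i)).card ≤ B)
      ↔
    -- Constrained Clustering with Outliers on A = Dᵀ with k' = |α|^k clusters is a
    -- yes-instance (outliers and clusters range over the columns of A, i.e. Fin m):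
    (∃ (O' : Finset (Fin m)) (part' : Fin m → Fin (Fintype.card α ^ k))
        (c' : Fin (Fintype.card α ^ k) → Fin n → α),
        O'.card ≤ ℓ ∧
        (∀ j : Fin n, ∃ t : Fin k, (fun i => c' i j) = (fun i => Q i t)) ∧
        ∑ i ∈ (Finset.univ : Finset (Fin m)) \ O',
          ((Finset.univ : Finset (Fin n)).filter
            (fun j => D i j ≠ c' (part' i) j)).card ≤ B) := by
  classical
  set e := Equiv.ofBijective Q hQ with he
  constructor
  · rintro ⟨O, part, c, hO, hB⟩
    refine ⟨O, fun i => e.symm (fun t => c t i), fun s j => Q s (part j), hO,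
      fun j => ⟨part j, rfl⟩, ?_⟩
    have key : ∀ i j, Q (e.symm (fun t => c t i)) (part j) = c (part j) i := by
      intro i j
      have : Q (e.symm (fun t => c t i)) = fun t => c t i := e.apply_symm_apply _
      rw [this]
    calc ∑ i ∈ (Finset.univ : Finset (Fin m)) \ O,
          ((Finset.univ : Finset (Fin n)).filter
            (fun j => D i j ≠ Q (e.symm (fun t => c t i)) (part j))).card
        = ∑ i ∈ (Finset.univ : Finset (Fin m)) \ O,
          ((Finset.univ : Finset (Fin n)).filter
            (fun j => D i j ≠ c (part j) i)).card := by
          refine Finset.sum_congr rfl fun i _ => ?_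
          congr 1; ext j; simp [key]
      _ = ∑ j : Fin n,
          ((Finset.univ : Finset (Fin m)).filter
            (fun i => i ∉ O ∧ D i j ≠ c (part j) i)).card :=
          swap_count O (fun i j => D i j ≠ c (part j) i)
      _ ≤ B := hB
  · rintro ⟨O', part', c', hO, hcons, hB⟩
    choose t ht using hcons
    refine ⟨O', t, fun s i => Q (part' i) s, hO, ?_⟩
    have key : ∀ i j, Q (part' i) (t j) = c' (part' i) j := by
      intro i j
      exact (congrFun (ht j) (part' i)).symm
    calc ∑ j : Fin n,
          ((Finset.univ : Finset (Fin m)).filter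
            (fun i => i ∉ O' ∧ D i j ≠ Q (part' i) (t j))).card
        = ∑ i ∈ (Finset.univ : Finset (Fin m)) \ O',
          ((Finset.univ : Finset (Fin n)).filter
            (fun j => D i j ≠ Q (part' i) (t j))).card :=
          (swap_count O' (fun i j => D i j ≠ Q (part' i) (t j))).symm
      _ = ∑ i ∈ (Finset.univ : Finset (Fin m)) \ O',
          ((Finset.univ : Finset (Fin n)).filter
            (fun j => D i j ≠ c' (part' i) j)).card := by
          refine Finset.sum_congr rfl fun i _ => ?_
          congr 1; ext j; simp [key]
      _ ≤ B := hB
end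

section
/- Let G be a graph such that for every vertex subset S of size t, every vertex of S has a neighbor outside S and there is at least one edge with both endpoints outside S. Let A be the vertex–edge incidence matrix of G (rows indexed by vertices, columns by edges, entries in {0,1}). Then for every set S of t vertices: the submatrix of A restricted to the rows of S has at most t + 1 distinct columns if and only if S is an independent set in G. -/
/-- Core of the W[1]-hardness reduction from Independent Set: if in `G` every `t`-sized
vertex set `S` is such that each vertex of `S` has a neighbor outside `S` and some edge lies
entirely outside `S`, then for every `t`-sized `S`, the incidence matrix of `G` restricted
to the rows of `S` has at most `t + 1` distinct columns iff `S` is an independent set. -/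
theorem incidence_restriction_iff_independent {V : Type*} [Fintype V] [DecidableEq V]
    (G : SimpleGraph V) [DecidableRel G.Adj] (t : ℕ)
    (hG : ∀ S : Finset V, S.card = t →
      (∀ s ∈ S, ∃ u, u ∉ S ∧ G.Adj s u) ∧ (∃ u v, u ∉ S ∧ v ∉ S ∧ G.Adj u v)) :
    ∀ S : Finset V, S.card = t →
      ((G.edgeFinset.image
          (fun e => fun s : {x // x ∈ S} => if (s : V) ∈ e then (1 : ℕ) else 0)).card
        ≤ t + 1 ↔ ∀ u ∈ S, ∀ v ∈ S, ¬ G.Adj u v) := by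
  intro S hS
  classical
  obtain ⟨hnbr, u0, v0, hu0, hv0, hadj0⟩ := hG S hS
  set F := (G.edgeFinset.image
      (fun e => fun s : {x // x ∈ S} => if (s : V) ∈ e then (1 : ℕ) else 0)) with hF
  set es : {x // x ∈ S} → ({x // x ∈ S} → ℕ) := fun s x => if x = s then 1 else 0 with hes
  have hinj : Function.Injective es := by
    intro a b hab
    by_contra hne
    have := congrFun hab a
    simp [hes, hne] at this
  have h0 : (0 : {x // x ∈ S} → ℕ) ∉ Finset.univ.image es := by
    simp only [Finset.mem_image]
    rintro ⟨s, -, h⟩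
    have := congrFun h s
    simp [hes] at this
  have hTcard : (insert (0 : {x // x ∈ S} → ℕ) (Finset.univ.image es)).card = t + 1 := by
    rw [Finset.card_insert_of_notMem h0, Finset.card_image_of_injective _ hinj,
      Finset.card_univ, Fintype.card_coe, hS]
  have hTF : insert (0 : {x // x ∈ S} → ℕ) (Finset.univ.image es) ⊆ F := by
    intro f hf
    rcases Finset.mem_insert.mp hf with rfl | hf
    · refine Finset.mem_image.mpr ⟨s(u0, v0), ?_, ?_⟩
      · simpa [SimpleGraph.mem_edgeFinset] using hadj0
      · funext x
        have hx := x.2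
        have hnot : ¬((x : V) = u0 ∨ (x : V) = v0) := by
          rintro (rfl | rfl)
          · exact hu0 hx
          · exact hv0 hx
        simp [Sym2.mem_iff, hnot]
    · obtain ⟨s, -, rfl⟩ := Finset.mem_image.mp hf
      obtain ⟨u, hu, hadj⟩ := hnbr s s.2
      refine Finset.mem_image.mpr ⟨s(s, u), ?_, ?_⟩
      · simpa [SimpleGraph.mem_edgeFinset] using hadj
      · funext x
        have hx := x.2
        by_cases hxs : x = s
        · simp [hxs, hes]
        · have h1 : (x : V) ≠ (s : V) := fun h => hxs (Subtype.ext h)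
          have h2 : (x : V) ≠ u := by rintro rfl; exact hu hx
          simp [hes, hxs, Sym2.mem_iff, h1, h2]
  constructor
  · intro hcard u hu v hv hadj
    set c : {x // x ∈ S} → ℕ := fun x => if (x : V) ∈ s(u, v) then 1 else 0 with hc
    have hcF : c ∈ F := Finset.mem_image.mpr
      ⟨s(u, v), by simpa [SimpleGraph.mem_edgeFinset] using hadj, rfl⟩
    have hcu : c ⟨u, hu⟩ = 1 := by simp [hc]
    have hcv : c ⟨v, hv⟩ = 1 := by simp [hc]
    have hcT : c ∉ insert (0 : {x // x ∈ S} → ℕ) (Finset.univ.image es) := by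
      simp only [Finset.mem_insert, Finset.mem_image]
      rintro (h | ⟨s, -, h⟩)
      · have := congrFun h ⟨u, hu⟩
        rw [hcu] at this
        simp at this
      · have h1 := congrFun h ⟨u, hu⟩
        have h2 := congrFun h ⟨v, hv⟩
        rw [hcu] at h1
        rw [hcv] at h2
        simp only [hes] at h1 h2
        have e1 : (⟨u, hu⟩ : {x // x ∈ S}) = s := by
          by_contra hne; simp [hne] at h1
        have e2 : (⟨v, hv⟩ : {x // x ∈ S}) = s := by
          by_contra hne; simp [hne] at h2
        have : u = v := congrArg Subtype.val (e1.trans e2.symm)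
        exact hadj.ne this
    have hsub : insert c (insert (0 : {x // x ∈ S} → ℕ) (Finset.univ.image es)) ⊆ F :=
      Finset.insert_subset hcF hTF
    have := Finset.card_le_card hsub
    rw [Finset.card_insert_of_notMem hcT, hTcard] at this
    omega
  · intro hind
    have hFT : F ⊆ insert (0 : {x // x ∈ S} → ℕ) (Finset.univ.image es) := by
      intro f hf
      obtain ⟨e, he, hfe⟩ := Finset.mem_image.mp hf
      induction e using Sym2.ind with
      | _ a b =>
        have hadj : G.Adj a b := by simpa [SimpleGraph.mem_edgeFinset] using he
        subst hfe
        by_cases ha : a ∈ S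
        · have hb : b ∉ S := fun hb => hind a ha b hb hadj
          refine Finset.mem_insert.mpr (Or.inr (Finset.mem_image.mpr ⟨⟨a, ha⟩, Finset.mem_univ _, ?_⟩))
          funext x
          have hx := x.2
          by_cases hxa : x = (⟨a, ha⟩ : {x // x ∈ S})
          · simp [hxa, hes]
          · have h1 : (x : V) ≠ a := fun h => hxa (Subtype.ext h)
            have h2 : (x : V) ≠ b := by rintro rfl; exact hb hx
            simp [hes, hxa, Sym2.mem_iff, h1, h2]
        · by_cases hb : b ∈ S
          · refine Finset.mem_insert.mpr (Or.inr (Finset.mem_image.mpr ⟨⟨b, hb⟩, Finset.mem_univ _, ?_⟩))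
            funext x
            have hx := x.2
            by_cases hxb : x = (⟨b, hb⟩ : {x // x ∈ S})
            · simp [hxb, hes]
            · have h1 : (x : V) ≠ b := fun h => hxb (Subtype.ext h)
              have h2 : (x : V) ≠ a := by rintro rfl; exact ha hx
              simp [hes, hxb, Sym2.mem_iff, h1, h2]
          · refine Finset.mem_insert.mpr (Or.inl ?_)
            funext x
            have hx := x.2
            have h1 : (x : V) ≠ a := by rintro rfl; exact ha hx
            have h2 : (x : V) ≠ b := by rintro rfl; exact hb hx
            simp [Sym2.mem_iff, h1, h2]
    calc F.card ≤ _ := Finset.card_le_card hFT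
      _ = t + 1 := hTcard
end

section
/- Let G(V,E) be a graph, A its vertex–edge incidence matrix, and C ⊆ V a set of vertices containing two vertices p, p' that are adjacent to each other and to all other vertices of G. Let O be the rows of A corresponding to C. Then the number of distinct columns of A restricted to the rows outside O is exactly 1 + |V \ C| + u, where u is the number of edges of G not covered by C (edges with both endpoints outside C). -/
/-- Counting distinct columns of an incidence matrix after deleting the rows of `C`, when
`C` contains two mutually adjacent universal vertices `p, p'`: the number of distinct
restricted columns is exactly `1 + |V \ C| + u`, where `u` is the number of edges not
covered by `C`. -/
theorem incidence_deletion_count {V : Type*} [Fintype V] [DecidableEq V]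
    (G : SimpleGraph V) [DecidableRel G.Adj] (C : Finset V) (p p' : V)
    (hp : p ∈ C) (hp' : p' ∈ C) (hpp' : G.Adj p p')
    (hup : ∀ v, v ≠ p → G.Adj p v) (hup' : ∀ v, v ≠ p' → G.Adj p' v) :
    (G.edgeFinset.image
        (fun e => fun v : {x // x ∉ C} => if (v : V) ∈ e then (1 : ℕ) else 0)).card =
      1 + ((Finset.univ : Finset V).filter (fun v => v ∉ C)).card +
        (G.edgeFinset.filter (fun e => ∀ v ∈ C, v ∉ e)).card := by
  classical
  set f : Sym2 V → ({x // x ∉ C} → ℕ) :=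
    fun e => fun v => if (v : V) ∈ e then 1 else 0 with hf
  set g : V → ({x // x ∉ C} → ℕ) := fun w v => if (v : V) = w then 1 else 0 with hg
  have key : G.edgeFinset.image f =
      insert (fun _ => 0)
        (((Finset.univ : Finset V).filter (fun v => v ∉ C)).image g ∪
          (G.edgeFinset.filter (fun e => ∀ v ∈ C, v ∉ e)).image f) := by
    ext h
    simp only [Finset.mem_image, Finset.mem_insert, Finset.mem_union, Finset.mem_filter,
      Finset.mem_univ, true_and]
    constructor
    · rintro ⟨e, he, rfl⟩
      induction e using Sym2.ind with
      | _ a b =>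
        by_cases haC : a ∈ C <;> by_cases hbC : b ∈ C
        · left; funext v
          have h1 : (v : V) ≠ a := fun h => v.2 (h ▸ haC)
          have h2 : (v : V) ≠ b := fun h => v.2 (h ▸ hbC)
          simp [hf, Sym2.mem_iff, h1, h2]
        · right; left
          refine ⟨b, hbC, ?_⟩
          funext v
          have h1 : (v : V) ≠ a := fun h => v.2 (h ▸ haC)
          simp [hf, hg, Sym2.mem_iff, h1]
        · right; left
          refine ⟨a, haC, ?_⟩
          funext v
          have h1 : (v : V) ≠ b := fun h => v.2 (h ▸ hbC)
          simp [hf, hg, Sym2.mem_iff, h1]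
        · right; right
          refine ⟨s(a, b), ⟨he, ?_⟩, rfl⟩
          intro v hv
          simp only [Sym2.mem_iff]
          push_neg
          exact ⟨fun h => haC (h ▸ hv), fun h => hbC (h ▸ hv)⟩
    · rintro (rfl | ⟨w, hw, rfl⟩ | ⟨e, ⟨he, _⟩, rfl⟩)
      · refine ⟨s(p, p'), SimpleGraph.mem_edgeFinset.mpr (G.mem_edgeSet.mpr hpp'), ?_⟩
        funext v
        have h1 : (v : V) ≠ p := fun h => v.2 (h ▸ hp)
        have h2 : (v : V) ≠ p' := fun h => v.2 (h ▸ hp')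
        simp [hf, Sym2.mem_iff, h1, h2]
      · have hwp : w ≠ p := fun h => hw (h ▸ hp)
        refine ⟨s(p, w), SimpleGraph.mem_edgeFinset.mpr (G.mem_edgeSet.mpr (hup w hwp)), ?_⟩
        funext v
        have h1 : (v : V) ≠ p := fun h => v.2 (h ▸ hp)
        simp [hf, hg, Sym2.mem_iff, h1]
      · exact ⟨e, he, rfl⟩
  rw [key]
  have hzero : (fun _ : {x // x ∉ C} => (0 : ℕ)) ∉
      ((Finset.univ : Finset V).filter (fun v => v ∉ C)).image g ∪
        (G.edgeFinset.filter (fun e => ∀ v ∈ C, v ∉ e)).image f := by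
    simp only [Finset.mem_union, Finset.mem_image, Finset.mem_filter, Finset.mem_univ, true_and]
    rintro (⟨w, hw, hEq⟩ | ⟨e, ⟨he, hcov⟩, hEq⟩)
    · have := congrFun hEq ⟨w, hw⟩
      simp [hg] at this
    · induction e using Sym2.ind with
      | _ a b =>
        have haC : a ∉ C := fun h => hcov a h (Sym2.mem_mk_left a b)
        have := congrFun hEq ⟨a, haC⟩
        simp [hf, Sym2.mem_mk_left] at this
  have hdisj : Disjoint (((Finset.univ : Finset V).filter (fun v => v ∉ C)).image g)
      ((G.edgeFinset.filter (fun e => ∀ v ∈ C, v ∉ e)).image f) := by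
    rw [Finset.disjoint_left]
    simp only [Finset.mem_image, Finset.mem_filter, Finset.mem_univ, true_and]
    rintro h ⟨w, hw, rfl⟩ ⟨e, ⟨he, hcov⟩, hEq⟩
    induction e using Sym2.ind with
    | _ a b =>
      have hab : a ≠ b := (G.mem_edgeSet.mp (SimpleGraph.mem_edgeFinset.mp he)).ne
      have haC : a ∉ C := fun h => hcov a h (Sym2.mem_mk_left a b)
      have hbC : b ∉ C := fun h => hcov b h (Sym2.mem_mk_right a b)
      have h1 := congrFun hEq ⟨a, haC⟩
      have h2 := congrFun hEq ⟨b, hbC⟩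
      simp only [hf, hg, Sym2.mem_mk_left, Sym2.mem_mk_right, if_true, if_true] at h1 h2
      have haw : a = w := by by_contra hne; rw [if_neg hne] at h1; exact one_ne_zero h1
      have hbw : b = w := by by_contra hne; rw [if_neg hne] at h2; exact one_ne_zero h2
      exact hab (haw.trans hbw.symm)
  have hg_inj : Set.InjOn g ((Finset.univ : Finset V).filter (fun v => v ∉ C)) := by
    intro w hw w' hw' hEq
    simp only [Finset.coe_filter, Set.mem_setOf_eq, Finset.mem_univ, true_and] at hw hw'
    have := congrFun hEq ⟨w, hw⟩
    simp only [hg, if_pos rfl] at this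
    by_contra hne
    rw [if_neg hne] at this
    exact one_ne_zero this
  have hf_inj : Set.InjOn f ((G.edgeFinset.filter (fun e => ∀ v ∈ C, v ∉ e)) : Finset (Sym2 V)) := by
    intro e he e' he' hEq
    simp only [Finset.coe_filter, Set.mem_setOf_eq] at he he'
    refine Sym2.ext fun x => ?_
    constructor
    · intro hx
      have hxC : x ∉ C := fun h => he.2 x h hx
      have := congrFun hEq ⟨x, hxC⟩
      simp only [hf, if_pos hx] at this
      by_contra hx'
      rw [if_neg hx'] at this
      exact one_ne_zero this
    · intro hx
      have hxC : x ∉ C := fun h => he'.2 x h hx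
      have := congrFun hEq ⟨x, hxC⟩
      simp only [hf, if_pos hx] at this
      by_contra hx'
      rw [if_neg hx'] at this
      exact one_ne_zero this.symm
  rw [Finset.card_insert_of_notMem hzero, Finset.card_union_of_disjoint hdisj,
    Finset.card_image_of_injOn hg_inj, Finset.card_image_of_injOn hf_inj]
  ring
end

section
/- Given a graph G(V,E), integers t and q, construct G' by adding a set P of 2 new vertices and a set D of d = 5 + t + |E| − q new isolated-from-each-other vertices, and joining each vertex of P to every other vertex of G'. Then G has a vertex subset of size at most t covering at least q edges if and only if G' has a vertex subset of size at most t + 2 covering at least q + 2|V'| − 3 edges, where V' = V ∪ P ∪ D. -/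
/-- The graph `G'` of the Partial Vertex Cover reduction: to `G` we add a set `P` of two
universal vertices (joined to every other vertex, including each other) and a set `D` of
`d` extra vertices adjacent only to `P`. -/
def pvcGraph {V : Type*} (G : SimpleGraph V) (d : ℕ) :
    SimpleGraph (V ⊕ (Fin 2 ⊕ Fin d)) where
  Adj x y :=
    x ≠ y ∧ ((∃ i, x = Sum.inr (Sum.inl i)) ∨ (∃ i, y = Sum.inr (Sum.inl i)) ∨
      (∃ u v, x = Sum.inl u ∧ y = Sum.inl v ∧ G.Adj u v))
  symm := by
    constructor
    rintro x y ⟨hne, h⟩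
    refine ⟨hne.symm, ?_⟩
    rcases h with h | h | ⟨u, v, hx, hy, ha⟩
    · exact Or.inr (Or.inl h)
    · exact Or.inl h
    · exact Or.inr (Or.inr ⟨v, u, hy, hx, ha.symm⟩)
  loopless := by constructor; rintro x ⟨hne, -⟩; exact hne rfl

open Finset SimpleGraph

attribute [local instance] Classical.propDecidable

namespace PvcAux

variable {V : Type*} [Fintype V]

/-- The universal vertices. -/
private def pp {V : Type*} (d : ℕ) (i : Fin 2) : V ⊕ (Fin 2 ⊕ Fin d) :=
  Sum.inr (Sum.inl i)

private lemma pp_ne {d : ℕ} : (pp d 0 : V ⊕ (Fin 2 ⊕ Fin d)) ≠ pp d 1 := by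
  simp [pp]

private lemma pvc_adj_left (G : SimpleGraph V) (d : ℕ) (i : Fin 2)
    (y : V ⊕ (Fin 2 ⊕ Fin d)) (h : y ≠ pp d i) :
    (pvcGraph G d).Adj (pp d i) y :=
  ⟨fun h' => h h'.symm, Or.inl ⟨i, rfl⟩⟩

private lemma ncard_sep {α : Type*} (F : Finset α) (P : α → Prop) :
    {x ∈ (↑F : Set α) | P x}.ncard = (F.filter P).card := by
  rw [show {x ∈ (↑F : Set α) | P x} = ↑(F.filter P) by ext x; simp, Set.ncard_coe_finset]

/-- The covered-edge finset. -/
private noncomputable def cov {V : Type*} [Fintype V] (G : SimpleGraph V) (C : Finset V) :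
    Finset (Sym2 V) :=
  G.edgeFinset.filter (fun e => ∃ v ∈ C, v ∈ e)

private lemma ncard_cov (G : SimpleGraph V) (C : Finset V) :
    {e ∈ G.edgeSet | ∃ v ∈ C, v ∈ e}.ncard = (cov G C).card := by
  rw [← coe_edgeFinset, ncard_sep]
  congr 1
  ext e
  simp [cov]

private lemma mem_cov (G : SimpleGraph V) (C : Finset V) (e : Sym2 V) :
    e ∈ cov G C ↔ e ∈ G.edgeFinset ∧ ∃ v ∈ C, v ∈ e := by
  simp [cov]

/-- Edges touching a universal vertex. -/
private noncomputable def BF (G : SimpleGraph V) (d : ℕ) :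
    Finset (Sym2 (V ⊕ (Fin 2 ⊕ Fin d))) :=
  (pvcGraph G d).incidenceFinset (pp d 0) ∪ (pvcGraph G d).incidenceFinset (pp d 1)

private lemma mem_BF (G : SimpleGraph V) (d : ℕ) (e : Sym2 (V ⊕ (Fin 2 ⊕ Fin d))) :
    e ∈ BF G d ↔ e ∈ (pvcGraph G d).edgeFinset ∧ (pp d 0 ∈ e ∨ pp d 1 ∈ e) := by
  simp only [BF, Finset.mem_union, mem_incidenceFinset, incidenceSet, Set.mem_sep_iff,
    mem_edgeFinset]
  tauto

private lemma card_nbr (G : SimpleGraph V) (d : ℕ) (i : Fin 2) :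
    ((pvcGraph G d).neighborFinset (pp d i)).card
      = Fintype.card (V ⊕ (Fin 2 ⊕ Fin d)) - 1 := by
  have h : (pvcGraph G d).neighborFinset (pp d i) = Finset.univ.erase (pp d i) := by
    ext y
    simp only [mem_neighborFinset, Finset.mem_erase, Finset.mem_univ, and_true]
    constructor
    · intro h; exact h.ne'
    · intro h; exact pvc_adj_left G d i y h
  rw [h, Finset.card_erase_of_mem (Finset.mem_univ _), Finset.card_univ]

private lemma card_BF (G : SimpleGraph V) (d : ℕ) :
    (BF G d).card = 2 * Fintype.card (V ⊕ (Fin 2 ⊕ Fin d)) - 3 := by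
  have hinter : (pvcGraph G d).incidenceFinset (pp d 0)
      ∩ (pvcGraph G d).incidenceFinset (pp d 1) = {s(pp d 0, pp d 1)} := by
    ext e
    simp only [Finset.mem_inter, mem_incidenceFinset, incidenceSet, Set.mem_sep_iff,
      Finset.mem_singleton]
    constructor
    · rintro ⟨⟨-, h0⟩, -, h1⟩
      exact (Sym2.mem_and_mem_iff pp_ne).mp ⟨h0, h1⟩
    · rintro rfl
      have hadj : (pvcGraph G d).Adj (pp d 0) (pp d 1) :=
        pvc_adj_left G d 0 (pp d 1) pp_ne.symm
      exact ⟨⟨hadj, by simp⟩, hadj, by simp⟩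
  have h1 := Finset.card_union_add_card_inter
    ((pvcGraph G d).incidenceFinset (pp d 0)) ((pvcGraph G d).incidenceFinset (pp d 1))
  rw [hinter, Finset.card_singleton] at h1
  have h2 : ((pvcGraph G d).incidenceFinset (pp d 0)).card
      = Fintype.card (V ⊕ (Fin 2 ⊕ Fin d)) - 1 := by
    rw [card_incidenceFinset_eq_degree, degree, card_nbr]
  have h3 : ((pvcGraph G d).incidenceFinset (pp d 1)).card
      = Fintype.card (V ⊕ (Fin 2 ⊕ Fin d)) - 1 := by
    rw [card_incidenceFinset_eq_degree, degree, card_nbr]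
  rw [h2, h3] at h1
  have hn2 : 2 ≤ Fintype.card (V ⊕ (Fin 2 ⊕ Fin d)) := by
    simp only [Fintype.card_sum, Fintype.card_fin]
    omega
  have hBF : (BF G d).card = ((pvcGraph G d).incidenceFinset (pp d 0)
      ∪ (pvcGraph G d).incidenceFinset (pp d 1)).card := rfl
  omega

private lemma edge_class (G : SimpleGraph V) (d : ℕ) (e : Sym2 (V ⊕ (Fin 2 ⊕ Fin d)))
    (he : e ∈ (pvcGraph G d).edgeFinset) :
    (pp d 0 ∈ e ∨ pp d 1 ∈ e) ∨ ∃ e₀ ∈ G.edgeFinset, e = Sym2.map Sum.inl e₀ := by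
  rw [mem_edgeFinset] at he
  induction e with
  | _ x y =>
    obtain ⟨hne, h⟩ := he
    rcases h with ⟨i, rfl⟩ | ⟨i, rfl⟩ | ⟨u, v, rfl, rfl, ha⟩
    · left; fin_cases i <;> simp [pp]
    · left; fin_cases i <;> simp [pp]
    · right
      exact ⟨s(u, v), by simpa using ha, by simp [Sym2.map_pair_eq]⟩

private lemma img_edge (G : SimpleGraph V) (d : ℕ) (e₀ : Sym2 V) (he₀ : e₀ ∈ G.edgeFinset) :
    Sym2.map Sum.inl e₀ ∈ (pvcGraph G d).edgeFinset := by
  induction e₀ with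
  | _ u v =>
    rw [mem_edgeFinset] at he₀ ⊢
    rw [Sym2.map_pair_eq]
    exact ⟨by simpa using he₀.ne, Or.inr (Or.inr ⟨u, v, rfl, rfl, he₀⟩)⟩

private lemma inl_inj (d : ℕ) :
    Function.Injective (Sym2.map (Sum.inl : V → V ⊕ (Fin 2 ⊕ Fin d))) :=
  Sym2.map.injective Sum.inl_injective

end PvcAux

open PvcAux in
private lemma pvc_iff {V : Type*} [Fintype V] (G : SimpleGraph V) (t q d : ℕ)
    (hcond : t + G.edgeSet.ncard + 4 < q + d + Fintype.card V) :
    (∃ C : Finset V, C.card ≤ t ∧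
        q ≤ {e ∈ G.edgeSet | ∃ v ∈ C, v ∈ e}.ncard) ↔
    (∃ C' : Finset (V ⊕ (Fin 2 ⊕ Fin d)),
        C'.card ≤ t + 2 ∧
        q + 2 * Fintype.card (V ⊕ (Fin 2 ⊕ Fin d)) - 3 ≤
          {e ∈ (pvcGraph G d).edgeSet | ∃ v ∈ C', v ∈ e}.ncard) := by
  have hm : G.edgeSet.ncard = G.edgeFinset.card := by
    rw [← coe_edgeFinset, Set.ncard_coe_finset]
  have hn' : Fintype.card (V ⊕ (Fin 2 ⊕ Fin d)) = Fintype.card V + (2 + d) := by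
    simp [Fintype.card_sum]
  constructor
  · -- forward direction
    rintro ⟨C, hCt, hq⟩
    rw [ncard_cov] at hq
    refine ⟨C.image (Sum.inl : V → V ⊕ (Fin 2 ⊕ Fin d)) ∪ {pp d 0, pp d 1}, ?_, ?_⟩
    · refine le_trans (Finset.card_union_le _ _) ?_
      have h1 : (C.image (Sum.inl : V → V ⊕ (Fin 2 ⊕ Fin d))).card ≤ t :=
        le_trans Finset.card_image_le hCt
      have h2 : ({pp d 0, pp d 1} : Finset (V ⊕ (Fin 2 ⊕ Fin d))).card ≤ 2 :=
        le_trans (Finset.card_insert_le _ _) (by simp)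
      omega
    · rw [ncard_cov]
      have hsub : BF G d ∪ (cov G C).image (Sym2.map Sum.inl)
          ⊆ cov (pvcGraph G d) (C.image (Sum.inl : V → V ⊕ (Fin 2 ⊕ Fin d))
              ∪ {pp d 0, pp d 1}) := by
        intro e he
        rcases Finset.mem_union.mp he with he | he
        · obtain ⟨he1, he2⟩ := (mem_BF G d e).mp he
          refine (mem_cov _ _ _).mpr ⟨he1, ?_⟩
          rcases he2 with h | h
          · exact ⟨pp d 0, by simp, h⟩
          · exact ⟨pp d 1, by simp, h⟩
        · obtain ⟨e₀, he₀, rfl⟩ := Finset.mem_image.mp he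
          obtain ⟨he₀E, v, hvC, hve⟩ := (mem_cov _ _ _).mp he₀
          refine (mem_cov _ _ _).mpr ⟨img_edge G d e₀ he₀E, Sum.inl v, ?_, ?_⟩
          · exact Finset.mem_union_left _ (Finset.mem_image.mpr ⟨v, hvC, rfl⟩)
          · exact Sym2.mem_map.mpr ⟨v, hve, rfl⟩
      have hdisj : Disjoint (BF G d) ((cov G C).image (Sym2.map Sum.inl)) := by
        rw [Finset.disjoint_left]
        intro e heB heI
        obtain ⟨e₀, he₀, rfl⟩ := Finset.mem_image.mp heI
        obtain ⟨-, h⟩ := (mem_BF G d _).mp heB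
        rcases h with h | h <;>
        · obtain ⟨a, -, ha⟩ := Sym2.mem_map.mp h
          simp [pp] at ha
      have hcard : (BF G d).card + (cov G C).card
          ≤ (cov (pvcGraph G d) (C.image (Sum.inl : V → V ⊕ (Fin 2 ⊕ Fin d))
              ∪ {pp d 0, pp d 1})).card := by
        have h := Finset.card_le_card hsub
        rwa [Finset.card_union_of_disjoint hdisj,
          Finset.card_image_of_injective _ (inl_inj d)] at h
      have hBcard := card_BF G d
      omega
  · -- backward direction
    rintro ⟨C', hC't, hq'⟩
    rw [ncard_cov] at hq'
    by_cases hP : pp d 0 ∈ C' ∧ pp d 1 ∈ C'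
    · -- both universal vertices in C'
      refine ⟨C'.preimage Sum.inl Sum.inl_injective.injOn, ?_, ?_⟩
      · -- cardinality bound
        have hsub : (C'.preimage Sum.inl Sum.inl_injective.injOn).image Sum.inl
            ∪ {pp d 0, pp d 1} ⊆ C' := by
          intro x hx
          rcases Finset.mem_union.mp hx with hx | hx
          · obtain ⟨u, hu, rfl⟩ := Finset.mem_image.mp hx
            exact Finset.mem_preimage.mp hu
          · rcases Finset.mem_insert.mp hx with rfl | hx
            · exact hP.1
            · rw [Finset.mem_singleton.mp hx]; exact hP.2
        have hdisj : Disjoint ((C'.preimage Sum.inl Sum.inl_injective.injOn).image Sum.inl)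
            ({pp d 0, pp d 1} : Finset _) := by
          rw [Finset.disjoint_left]
          intro x hx hx'
          obtain ⟨u, -, rfl⟩ := Finset.mem_image.mp hx
          rcases Finset.mem_insert.mp hx' with h | h
          · exact absurd h (by simp [pp])
          · rw [Finset.mem_singleton] at h
            exact absurd h (by simp [pp])
        have h2 : ({pp d 0, pp d 1} : Finset (V ⊕ (Fin 2 ⊕ Fin d))).card = 2 := by
          rw [Finset.card_insert_of_notMem (by simpa using pp_ne), Finset.card_singleton]
        have hcards := Finset.card_le_card hsub
        rw [Finset.card_union_of_disjoint hdisj,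
          Finset.card_image_of_injective _ Sum.inl_injective, h2] at hcards
        omega
      · rw [ncard_cov]
        have hsub : cov (pvcGraph G d) C' ⊆ BF G d
            ∪ (cov G (C'.preimage Sum.inl Sum.inl_injective.injOn)).image
                (Sym2.map Sum.inl) := by
          intro e he
          obtain ⟨heE, v, hvC', hve⟩ := (mem_cov _ _ _).mp he
          rcases edge_class G d e heE with h | ⟨e₀, he₀, rfl⟩
          · exact Finset.mem_union_left _ ((mem_BF G d e).mpr ⟨heE, h⟩)
          · refine Finset.mem_union_right _ (Finset.mem_image.mpr ⟨e₀, ?_, rfl⟩)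
            obtain ⟨u, hue₀, rfl⟩ := Sym2.mem_map.mp hve
            exact (mem_cov _ _ _).mpr ⟨he₀, u, Finset.mem_preimage.mpr hvC', hue₀⟩
        have hScard := le_trans (Finset.card_le_card hsub) (Finset.card_union_le _ _)
        rw [Finset.card_image_of_injective _ (inl_inj d)] at hScard
        have hBcard := card_BF G d
        omega
    · -- some universal vertex missing from C' : contradiction
      exfalso
      have key : ∀ a b : Fin 2, a ≠ b → pp d a ∉ C' → False := by
        intro a b hab hpa
        have hcover : ∀ k : Fin 2, k = a ∨ k = b := by
          intro k; fin_cases a <;> fin_cases b <;> fin_cases k <;> simp_all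
        -- edges of cov containing pp d a
        have h1 : ((cov (pvcGraph G d) C').filter fun e => pp d a ∈ e)
            ⊆ C'.image (fun v => s(pp d a, v)) := by
          intro e he
          obtain ⟨heS, hpae⟩ := Finset.mem_filter.mp he
          obtain ⟨-, v, hvC', hve⟩ := (mem_cov _ _ _).mp heS
          have hne : pp d a ≠ v := by rintro rfl; exact hpa hvC'
          exact Finset.mem_image.mpr ⟨v, hvC',
            ((Sym2.mem_and_mem_iff hne).mp ⟨hpae, hve⟩).symm⟩
        have hc1 : ((cov (pvcGraph G d) C').filter fun e => pp d a ∈ e).card ≤ t + 2 :=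
          le_trans (Finset.card_le_card h1) (le_trans Finset.card_image_le hC't)
        -- edges of cov not containing pp d a
        have h2 : ((cov (pvcGraph G d) C').filter fun e => pp d a ∉ e)
            ⊆ (pvcGraph G d).incidenceFinset (pp d b)
              ∪ G.edgeFinset.image (Sym2.map Sum.inl) := by
          intro e he
          obtain ⟨heS, hpae⟩ := Finset.mem_filter.mp he
          obtain ⟨heE, -⟩ := (mem_cov _ _ _).mp heS
          rcases edge_class G d e heE with h | ⟨e₀, he₀, rfl⟩
          · have hb : pp d b ∈ e := by
              rcases h with h | h
              · rcases hcover 0 with h' | h'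
                · exact absurd (h' ▸ h) hpae
                · exact h' ▸ h
              · rcases hcover 1 with h' | h'
                · exact absurd (h' ▸ h) hpae
                · exact h' ▸ h
            refine Finset.mem_union_left _ ?_
            rw [mem_incidenceFinset]
            exact ⟨mem_edgeFinset.mp heE, hb⟩
          · exact Finset.mem_union_right _ (Finset.mem_image.mpr ⟨e₀, he₀, rfl⟩)
        have hc2 : ((cov (pvcGraph G d) C').filter fun e => pp d a ∉ e).card
            ≤ (Fintype.card (V ⊕ (Fin 2 ⊕ Fin d)) - 1) + G.edgeFinset.card := by
          refine le_trans (Finset.card_le_card h2) (le_trans (Finset.card_union_le _ _) ?_)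
          rw [Finset.card_image_of_injective _ (inl_inj d),
            card_incidenceFinset_eq_degree, degree, card_nbr]
        have hsplit : ((cov (pvcGraph G d) C').filter fun e => pp d a ∈ e).card
            + ((cov (pvcGraph G d) C').filter fun e => pp d a ∉ e).card
            = (cov (pvcGraph G d) C').card :=
          Finset.card_filter_add_card_filter_not _
        omega
      rcases not_and_or.mp hP with h | h
      · exact key 0 1 (by simp) h
      · exact key 1 0 (by simp) h

/-- Correctness of the Partial Vertex Cover reduction: `G` has a set of at most `t` vertices
covering at least `q` edges iff `G'` (with `d = 5 + t + |E| − q` added pendant-type vertices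
and two universal vertices) has a set of at most `t + 2` vertices covering at least
`q + 2|V'| − 3` edges. -/
theorem pvc_reduction_correct {V : Type*} [Fintype V] (G : SimpleGraph V) (t q : ℕ) :
    (∃ C : Finset V, C.card ≤ t ∧
        q ≤ {e ∈ G.edgeSet | ∃ v ∈ C, v ∈ e}.ncard) ↔
    (∃ C' : Finset (V ⊕ (Fin 2 ⊕ Fin (5 + t + G.edgeSet.ncard - q))),
        C'.card ≤ t + 2 ∧
        q + 2 * Fintype.card (V ⊕ (Fin 2 ⊕ Fin (5 + t + G.edgeSet.ncard - q))) - 3 ≤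
          {e ∈ (pvcGraph G (5 + t + G.edgeSet.ncard - q)).edgeSet |
            ∃ v ∈ C', v ∈ e}.ncard) := by
  exact pvc_iff G t q _ (by omega)
end
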